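/- The formula ¬◇¬p ↔ □p (where ◇C abbreviates ¬□¬C) is not provable in the pure logic of necessitation N; in particular there is an N-model and a world where ¬□¬¬p holds but □p fails. -/
import Mathlib


/-- Modal formulas: propositional variables, ⊥, ∧, ∨, →, □.  Negation is defined. -/
inductive Formula : Type
  | var : ℕ → Formula
  | bot : Formula
  | and : Formula → Formula → Formula
  | or : Formula → Formula → Formula
  | imp : Formula → Formula → Formula
  | box : Formula → Formula
deriving DecidableEq

namespace Formula
/-- ¬A := A → ⊥ -/
def neg (A : Formula) : Formula := A.imp .bot
end Formula

/-- `A` is a propositional tautology (in the modal language): it is true under every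
assignment of truth values that respects the propositional connectives (variables and
boxed formulas are treated as atoms). -/
def IsTautology (A : Formula) : Prop :=
  ∀ v : Formula → Prop,
    (¬ v .bot) →
    (∀ B C, v (.and B C) ↔ (v B ∧ v C)) →
    (∀ B C, v (.or B C) ↔ (v B ∨ v C)) →
    (∀ B C, v (.imp B C) ↔ (v B → v C)) →
    v A

/-- Satisfaction in an N-model `(W, {≺_B}, ⊩)` with relations `R` and valuation `V`:
`x ⊩ □B` iff every `y` with `x ≺_B y` satisfies `B`. -/
def Sat {W : Type} (R : Formula → W → W → Prop) (V : W → ℕ → Prop) :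
    W → Formula → Prop
  | w, .var n => V w n
  | _, .bot => False
  | w, .and A B => Sat R V w A ∧ Sat R V w B
  | w, .or A B => Sat R V w A ∨ Sat R V w B
  | w, .imp A B => Sat R V w A → Sat R V w B
  | w, .box A => ∀ y, R A w y → Sat R V y A

/-- The set of subformulas Sub(A). -/
def subf : Formula → Finset Formula
  | .var n => {.var n}
  | .bot => {.bot}
  | .and A B => insert (.and A B) (subf A ∪ subf B)
  | .or A B => insert (.or A B) (subf A ∪ subf B)
  | .imp A B => insert (.imp A B) (subf A ∪ subf B)
  | .box A => insert (.box A) (subf A)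

/-- The pure logic of necessitation N. -/
inductive NProv : Formula → Prop
  | taut {A} : IsTautology A → NProv A
  | mp {A B} : NProv (A.imp B) → NProv A → NProv B
  | nec {A} : NProv A → NProv A.box

/-- ◇C := ¬□¬C. -/
def dia (C : Formula) : Formula := (C.neg.box).neg

theorem soundness {A : Formula} (h : NProv A) {W : Type}
    (R : Formula → W → W → Prop) (V : W → ℕ → Prop) (w : W) : Sat R V w A := by
  induction h generalizing w with
  | taut ht =>
      exact ht (Sat R V w) (fun h => h) (fun B C => Iff.rfl) (fun B C => Iff.rfl) (fun B C => Iff.rfl)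
  | mp _ _ ih1 ih2 => exact ih1 w (ih2 w)
  | nec _ ih => exact fun y _ => ih y

/-- `¬◇¬p ↔ □p` is not provable in N; and there are an N-model and a world where
`¬□¬¬p` holds but `□p` fails. -/
theorem stmt13 :
    (¬ NProv ((((dia (Formula.var 0).neg).neg).imp ((Formula.var 0).box)).and
      (((Formula.var 0).box).imp ((dia (Formula.var 0).neg).neg)))) ∧
    ∃ (W : Type) (_ : Nonempty W) (R : Formula → W → W → Prop)
      (V : W → ℕ → Prop) (x : W),
        Sat R V x ((((Formula.var 0).neg.neg).box).neg) ∧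
        ¬ Sat R V x ((Formula.var 0).box) := by
  constructor
  · intro h
    have := soundness h (W := Unit) (fun A _ _ => A = Formula.var 0)
      (fun _ _ => False) ()
    rcases this with ⟨h1, _⟩
    have hbox : Sat (W := Unit) (fun A _ _ => A = Formula.var 0)
        (fun _ _ => False) () ((Formula.var 0).box) := by
      apply h1
      intro hb
      exact hb (fun y hy => Formula.noConfusion hy)
    exact hbox () rfl
  · refine ⟨Unit, ⟨()⟩, fun _ _ _ => True, fun _ _ => False, (), ?_, ?_⟩
    · intro h
      exact h () trivial (fun hp => hp)
    · intro h
      exact h () trivial
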